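/- arXiv:1407.3597 — 11 statements merged into one kernel-verified Lean document; each statement's English description precedes it below -/
import Mathlib

section
/- Energy equation: if x : ℝ → ℝ is twice differentiable with x'(t) ≠ 1 for all t and x solves the equation (E), then the function t ↦ cos²(x(t))·(2x'(t) − 1)/(1 − x'(t))² is constant on ℝ; in particular its value equals cos²(x(0))·(2x'(0) − 1)/(1 − x'(0))² for all t. -/
/-!
Writing `p = cos x / (1 - x')`, equation (E) says `p' = -sin x`, while `(cos x)' = -sin x · x'`
and `cos x = p (1 - x')`. Hence `p² - 2 p cos x` has derivative
`2 sin x (cos x - p (1 - x')) = 0`, and this first integral equals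
`cos² x (2x' - 1) / (1 - x')²`.
-/

open Real

lemma hasDerivAt_sq_sub_two_mul_mul_of_mul_sub_eq {p c : ℝ → ℝ} {a b t : ℝ}
    (hp : HasDerivAt p a t) (hc : HasDerivAt c b t) (h : a * (p t - c t) = p t * b) :
    HasDerivAt (fun s => p s ^ 2 - 2 * p s * c s) 0 t := by
  refine ((hp.pow 2).sub ((hp.const_mul 2).mul hc)).congr_deriv ?_
  push_cast
  linear_combination 2 * h

lemma sq_mul_two_mul_sub_one_div_one_sub_sq {c v : ℝ} (hv : v ≠ 1) :
    c ^ 2 * (2 * v - 1) / (1 - v) ^ 2 = (c / (1 - v)) ^ 2 - 2 * (c / (1 - v)) * c := by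
  have : 1 - v ≠ 0 := sub_ne_zero.mpr hv.symm
  field_simp
  ring

lemma hasDerivAt_cos_div_one_sub_deriv {x : ℝ → ℝ} {t : ℝ}
    (hx : DifferentiableAt ℝ x t) (hx' : DifferentiableAt ℝ (deriv x) t) (hne : deriv x t ≠ 1)
    (heq : cos (x t) * deriv (deriv x) t / (1 - deriv x t) ^ 2
        - sin (x t) * deriv x t / (1 - deriv x t) = -sin (x t)) :
    HasDerivAt (fun s => cos (x s) / (1 - deriv x s)) (-sin (x t)) t := by
  have hden : 1 - deriv x t ≠ 0 := sub_ne_zero.mpr hne.symm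
  refine ((hx.hasDerivAt.cos).div (hx'.hasDerivAt.const_sub 1) hden).congr_deriv (.trans ?_ heq)
  field_simp
  ring

/-- Energy equation: if `x` is a twice differentiable solution of
`(E): d/dt(cos x / (1 - x')) = - sin x` with `x'(t) ≠ 1` everywhere, then
`t ↦ cos²(x t) (2 x' t - 1) / (1 - x' t)²` is constant; in particular it
always equals its value at `t = 0`. -/
theorem energy_equation (x : ℝ → ℝ)
    (hx1 : Differentiable ℝ x) (hx2 : Differentiable ℝ (deriv x))
    (hne : ∀ t : ℝ, deriv x t ≠ 1)
    (heq : ∀ t : ℝ,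
      Real.cos (x t) * deriv (deriv x) t / (1 - deriv x t) ^ 2
        - Real.sin (x t) * deriv x t / (1 - deriv x t) = - Real.sin (x t)) :
    ∀ t : ℝ,
      Real.cos (x t) ^ 2 * (2 * deriv x t - 1) / (1 - deriv x t) ^ 2
        = Real.cos (x 0) ^ 2 * (2 * deriv x 0 - 1) / (1 - deriv x 0) ^ 2 := by
  set p : ℝ → ℝ := fun s => cos (x s) / (1 - deriv x s)
  have hF : ∀ t, HasDerivAt (fun s => p s ^ 2 - 2 * p s * cos (x s)) 0 t := by
    intro t
    refine hasDerivAt_sq_sub_two_mul_mul_of_mul_sub_eq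
      (hasDerivAt_cos_div_one_sub_deriv (hx1 t) (hx2 t) (hne t) (heq t))
      (hx1 t).hasDerivAt.cos ?_
    have hden : 1 - deriv x t ≠ 0 := sub_ne_zero.mpr (hne t).symm
    simp only [p]
    field_simp
    ring
  intro t
  rw [sq_mul_two_mul_sub_one_div_one_sub_sq (hne t), sq_mul_two_mul_sub_one_div_one_sub_sq (hne 0)]
  exact is_const_of_deriv_eq_zero (fun s => (hF s).differentiableAt) (fun s => (hF s).deriv) t 0
end

section
/- If x : ℝ → ℝ is twice differentiable with x'(t) ≠ 1 for all t, x solves the equation (E), x(0) = a, x'(0) = b with b ≠ 1, and cos x(t) ≠ 0 for all t, then setting c = (2b − 1)cos²a/(1 − b)², one has x'(t)²/(1 − x'(t))² = 1 + c/cos²(x(t)) for all t ∈ ℝ. -/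
/-!
Along a solution, `cos² x · (2x' - 1) / (1 - x')²` is a first integral of (E): its derivative is
`2 cos x · x' · (cos x · x'' - sin x · (1 - x') (2x' - 1)) / (1 - x')³`, and (E) with its
denominators cleared says exactly that the bracket vanishes. Evaluating the first integral at
`t = 0` gives `c`, and dividing by `cos² x` gives the stated identity.
-/

open Real

noncomputable def energy (p q : ℝ) : ℝ := cos q ^ 2 * (2 * p - 1) / (1 - p) ^ 2

lemma cos_mul_eq_of_ode {p q r : ℝ} (hp : p ≠ 1)
    (h : cos q * r / (1 - p) ^ 2 - sin q * p / (1 - p) = -sin q) :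
    cos q * r = sin q * (1 - p) * (2 * p - 1) := by
  have hp' : 1 - p ≠ 0 := sub_ne_zero.mpr hp.symm
  field_simp at h
  linear_combination h

lemma sq_div_one_sub_sq_of_energy_eq {p q c : ℝ} (hp : p ≠ 1) (hq : cos q ≠ 0)
    (h : energy p q = c) : p ^ 2 / (1 - p) ^ 2 = 1 + c / cos q ^ 2 := by
  have hp' : 1 - p ≠ 0 := sub_ne_zero.mpr hp.symm
  rw [← h, energy]
  field_simp
  ring

lemma hasDerivAt_energy {u v : ℝ → ℝ} {u' v' t : ℝ} (hu : HasDerivAt u u' t)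
    (hv : HasDerivAt v v' t) (hu1 : u t ≠ 1) :
    HasDerivAt (fun s => energy (u s) (v s))
      (2 * cos (v t) * (cos (v t) * u' * u t - sin (v t) * v' * (1 - u t) * (2 * u t - 1))
        / (1 - u t) ^ 3) t := by
  have hu1' : 1 - u t ≠ 0 := sub_ne_zero.mpr hu1.symm
  have hN := (hv.cos.fun_pow 2).fun_mul ((hu.const_mul 2).sub_const 1)
  have hD := (hu.const_sub 1).fun_pow 2
  refine (hN.fun_div hD (pow_ne_zero 2 hu1')).congr_deriv ?_
  field_simp
  ring

theorem energy_equation_sec_form_general (x : ℝ → ℝ) (a b c : ℝ)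
    (hx1 : Differentiable ℝ x) (hx2 : Differentiable ℝ (deriv x))
    (hne : ∀ t : ℝ, deriv x t ≠ 1)
    (heq : ∀ t : ℝ,
      Real.cos (x t) * deriv (deriv x) t / (1 - deriv x t) ^ 2
        - Real.sin (x t) * deriv x t / (1 - deriv x t) = - Real.sin (x t))
    (ha : x 0 = a) (hb : deriv x 0 = b)
    (hcos : ∀ t : ℝ, Real.cos (x t) ≠ 0)
    (hc : c = (2 * b - 1) * Real.cos a ^ 2 / (1 - b) ^ 2) :
    ∀ t : ℝ,
      (deriv x t) ^ 2 / (1 - deriv x t) ^ 2 = 1 + c / Real.cos (x t) ^ 2 := by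
  have hderiv : ∀ t, HasDerivAt (fun s => energy (deriv x s) (x s)) 0 t := fun t => by
    convert hasDerivAt_energy (hx2 t).hasDerivAt (hx1 t).hasDerivAt (hne t) using 1
    rw [cos_mul_eq_of_ode (hne t) (heq t)]
    ring
  have hconst : ∀ t, energy (deriv x t) (x t) = c := fun t => by
    rw [is_const_of_deriv_eq_zero (fun s => (hderiv s).differentiableAt)
      (fun s => (hderiv s).deriv) t 0, ha, hb, hc, energy]
    ring
  exact fun t => sq_div_one_sub_sq_of_energy_eq (hne t) (hcos t) (hconst t)

/-- If `x` is a twice differentiable solution of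
`(E): d/dt(cos x / (1 - x')) = - sin x` with `x'(t) ≠ 1` everywhere,
`x 0 = a`, `x' 0 = b ≠ 1`, and `cos (x t) ≠ 0` everywhere, then with
`c = (2b - 1) cos² a / (1 - b)²` one has
`x'(t)² / (1 - x'(t))² = 1 + c / cos²(x t)` for all `t`. -/
theorem energy_equation_sec_form (x : ℝ → ℝ) (a b c : ℝ)
    (hx1 : Differentiable ℝ x) (hx2 : Differentiable ℝ (deriv x))
    (hne : ∀ t : ℝ, deriv x t ≠ 1)
    (heq : ∀ t : ℝ,
      Real.cos (x t) * deriv (deriv x) t / (1 - deriv x t) ^ 2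
        - Real.sin (x t) * deriv x t / (1 - deriv x t) = - Real.sin (x t))
    (ha : x 0 = a) (hb : deriv x 0 = b) (hb1 : b ≠ 1)
    (hcos : ∀ t : ℝ, Real.cos (x t) ≠ 0)
    (hc : c = (2 * b - 1) * Real.cos a ^ 2 / (1 - b) ^ 2) :
    ∀ t : ℝ,
      (deriv x t) ^ 2 / (1 - deriv x t) ^ 2 = 1 + c / Real.cos (x t) ^ 2 :=
  energy_equation_sec_form_general x a b c hx1 hx2 hne heq ha hb hcos hc
end

section
/- If x : ℝ → ℝ is twice differentiable with x'(t) ≠ 1 for all t, x solves the equation (E), x(0) = a with |a| < π/2, x'(0) = b with b < 1/2, and |a| + |b| > 0, then cos x(t) ≠ 0 for all t and x'(t) < 1/2 for all t ∈ ℝ; that is, the orbit stays in the half-plane x' < 1/2. -/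
/-!
For the momentum `y = cos x / (1 - x')`, equation (E) reads `y' = -sin x`, and
then the energy `K = y² - 2 y cos x` is a first integral. Since `cos x = y (1 - x')`, we have
`K = y² (2x' - 1)`, so `K < 0` says exactly that `cos x ≠ 0` and `x' < 1/2`.
At `t = 0` this holds because `cos a > 0` and `b < 1/2`, and `K` is constant.
-/

namespace OrbitE

open Real

noncomputable def momentum (x : ℝ → ℝ) (t : ℝ) : ℝ := cos (x t) / (1 - deriv x t)

noncomputable def energy (x : ℝ → ℝ) (t : ℝ) : ℝ :=
  momentum x t ^ 2 - 2 * momentum x t * cos (x t)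

variable {x : ℝ → ℝ} {t : ℝ}

theorem momentum_mul_one_sub_deriv (hne : deriv x t ≠ 1) :
    momentum x t * (1 - deriv x t) = cos (x t) :=
  div_mul_cancel₀ _ (sub_ne_zero.mpr hne.symm)

theorem energy_eq (hne : deriv x t ≠ 1) :
    energy x t = momentum x t ^ 2 * (2 * deriv x t - 1) := by
  rw [energy, ← momentum_mul_one_sub_deriv hne]
  ring

theorem energy_neg_iff (hne : deriv x t ≠ 1) :
    energy x t < 0 ↔ cos (x t) ≠ 0 ∧ deriv x t < 1 / 2 := by
  have hmom : momentum x t ≠ 0 ↔ cos (x t) ≠ 0 := by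
    rw [← momentum_mul_one_sub_deriv hne, mul_ne_zero_iff,
      and_iff_left (sub_ne_zero.mpr hne.symm)]
  rw [energy_eq hne, ← hmom, mul_neg_iff]
  constructor
  · rintro (⟨hpos, hlt⟩ | ⟨hneg, -⟩)
    · exact ⟨sq_pos_iff.mp hpos, by linarith⟩
    · exact absurd hneg (sq_nonneg _).not_gt
  · rintro ⟨hm, hlt⟩
    exact Or.inl ⟨sq_pos_of_ne_zero hm, by linarith⟩

theorem hasDerivAt_momentum (hx1 : Differentiable ℝ x) (hx2 : Differentiable ℝ (deriv x))
    (hne : deriv x t ≠ 1)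
    (heq : cos (x t) * deriv (deriv x) t / (1 - deriv x t) ^ 2
      - sin (x t) * deriv x t / (1 - deriv x t) = - sin (x t)) :
    HasDerivAt (momentum x) (-sin (x t)) t := by
  have hden : 1 - deriv x t ≠ 0 := sub_ne_zero.mpr hne.symm
  have hcos : HasDerivAt (fun s => cos (x s)) (-sin (x t) * deriv x t) t :=
    (hasDerivAt_cos (x t)).comp t (hx1 t).hasDerivAt
  have hden' : HasDerivAt (fun s => 1 - deriv x s) (0 - deriv (deriv x) t) t :=
    (hasDerivAt_const t 1).sub (hx2 t).hasDerivAt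
  refine (hcos.div hden' hden).congr_deriv ?_
  field_simp at heq ⊢
  linear_combination heq

theorem hasDerivAt_energy (hx1 : Differentiable ℝ x) (hne : deriv x t ≠ 1)
    (hmom : HasDerivAt (momentum x) (-sin (x t)) t) :
    HasDerivAt (energy x) 0 t := by
  have hcos : HasDerivAt (fun s => cos (x s)) (-sin (x t) * deriv x t) t :=
    (hasDerivAt_cos (x t)).comp t (hx1 t).hasDerivAt
  refine ((hmom.pow 2).sub ((hmom.const_mul 2).mul hcos)).congr_deriv ?_
  linear_combination -2 * sin (x t) * momentum_mul_one_sub_deriv hne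

end OrbitE

open OrbitE in
theorem orbit_stays_below_half_general (x : ℝ → ℝ) (a b : ℝ)
    (hx1 : Differentiable ℝ x) (hx2 : Differentiable ℝ (deriv x))
    (hne : ∀ t : ℝ, deriv x t ≠ 1)
    (heq : ∀ t : ℝ,
      Real.cos (x t) * deriv (deriv x) t / (1 - deriv x t) ^ 2
        - Real.sin (x t) * deriv x t / (1 - deriv x t) = - Real.sin (x t))
    (ha : x 0 = a) (haa : |a| < Real.pi / 2)
    (hb : deriv x 0 = b) (hbb : b < 1 / 2) :
    (∀ t : ℝ, Real.cos (x t) ≠ 0) ∧ (∀ t : ℝ, deriv x t < 1 / 2) := by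
  have hK : ∀ s, HasDerivAt (energy x) 0 s := fun s =>
    hasDerivAt_energy hx1 (hne s) (hasDerivAt_momentum hx1 hx2 (hne s) (heq s))
  have hconst : ∀ t, energy x t = energy x 0 := fun t =>
    is_const_of_deriv_eq_zero (fun s => (hK s).differentiableAt) (fun s => (hK s).deriv) t 0
  have hcos0 : Real.cos (x 0) ≠ 0 := by
    rw [ha]
    exact (Real.cos_pos_of_mem_Ioo ⟨neg_lt_of_abs_lt haa, lt_of_abs_lt haa⟩).ne'
  have h0 : energy x 0 < 0 := (energy_neg_iff (hne 0)).mpr ⟨hcos0, hb ▸ hbb⟩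
  have hbelow : ∀ t, Real.cos (x t) ≠ 0 ∧ deriv x t < 1 / 2 := fun t =>
    (energy_neg_iff (hne t)).mp (hconst t ▸ h0)
  exact ⟨fun t => (hbelow t).1, fun t => (hbelow t).2⟩

/-- If `x` is a twice differentiable solution of
`(E): d/dt(cos x / (1 - x')) = - sin x` with `x'(t) ≠ 1` everywhere,
`x 0 = a` with `|a| < π/2`, `x' 0 = b` with `b < 1/2`, and `|a| + |b| > 0`,
then `cos (x t) ≠ 0` and `x'(t) < 1/2` for all `t`: the orbit stays in the
half-plane `x' < 1/2`. -/
theorem orbit_stays_below_half (x : ℝ → ℝ) (a b : ℝ)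
    (hx1 : Differentiable ℝ x) (hx2 : Differentiable ℝ (deriv x))
    (hne : ∀ t : ℝ, deriv x t ≠ 1)
    (heq : ∀ t : ℝ,
      Real.cos (x t) * deriv (deriv x) t / (1 - deriv x t) ^ 2
        - Real.sin (x t) * deriv x t / (1 - deriv x t) = - Real.sin (x t))
    (ha : x 0 = a) (haa : |a| < Real.pi / 2)
    (hb : deriv x 0 = b) (hbb : b < 1 / 2)
    (hab : |a| + |b| > 0) :
    (∀ t : ℝ, Real.cos (x t) ≠ 0) ∧ (∀ t : ℝ, deriv x t < 1 / 2) :=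
  orbit_stays_below_half_general x a b hx1 hx2 hne heq ha haa hb hbb
end

section
/- For all t ∈ ℝ, D(t) = (A cos t + B sin t)² + (2(1 − b) + B cos t − A sin t)², and D(t) > 0 for every t; that is, the two squares never vanish simultaneously. -/
/-!
Completing the square gives the sum-of-squares form. Both squares vanish at some `t` only if
`A² + B² = 4(1 - b)²`, because `(A cos t + B sin t, B cos t - A sin t)` is the vector `(A, B)`
rotated by `t`. But `A² + B² - 4(1 - b)² = 4(2b - 1) cos² a`, which is nonzero when `b ≠ 1/2` and
`|a| < π/2`.
-/

open Real

lemma rotate_sq_add_sq (A B t : ℝ) :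
    (A * cos t + B * sin t) ^ 2 + (B * cos t - A * sin t) ^ 2 = A ^ 2 + B ^ 2 := by
  linear_combination (A ^ 2 + B ^ 2) * sin_sq_add_cos_sq t

lemma sq_add_sq_add_two_mul_rotate (A B c t : ℝ) :
    A ^ 2 + B ^ 2 + 2 * c * (B * cos t - A * sin t) + c ^ 2 =
      (A * cos t + B * sin t) ^ 2 + (c + B * cos t - A * sin t) ^ 2 := by
  linear_combination -rotate_sq_add_sq A B t

lemma rotate_sq_add_sq_pos {A B c : ℝ} (h : A ^ 2 + B ^ 2 ≠ c ^ 2) (t : ℝ) :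
    0 < (A * cos t + B * sin t) ^ 2 + (c + B * cos t - A * sin t) ^ 2 := by
  refine lt_of_le_of_ne (by positivity) fun hzero => h ?_
  obtain ⟨h₁, h₂⟩ := (add_eq_zero_iff_of_nonneg (sq_nonneg _) (sq_nonneg _)).1 hzero.symm
  have hx : A * cos t + B * sin t = 0 := pow_eq_zero_iff two_ne_zero |>.1 h₁
  have hy : B * cos t - A * sin t = -c := by linarith [pow_eq_zero_iff two_ne_zero |>.1 h₂]
  rw [← rotate_sq_add_sq A B t, hx, hy]
  ring

lemma sin_two_mul_sq_add_add_cos_two_mul_sq (a s : ℝ) :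
    sin (2 * a) ^ 2 + (s + cos (2 * a)) ^ 2 = (1 - s) ^ 2 + 4 * s * cos a ^ 2 := by
  rw [sin_two_mul, cos_two_mul]
  linear_combination 4 * cos a ^ 2 * sin_sq_add_cos_sq a

theorem denominator_positive_general (a b : ℝ)
    (ha : |a| < Real.pi / 2) (hb2 : b ≠ 1 / 2)
    (A B : ℝ) (hA : A = Real.sin (2 * a)) (hB : B = 2 * b - 1 + Real.cos (2 * a))
    (D : ℝ → ℝ)
    (hD : ∀ t : ℝ, D t =
      A ^ 2 + B ^ 2 + 4 * (1 - b) * (B * Real.cos t - A * Real.sin t)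
        + 4 * (1 - b) ^ 2) :
    ∀ t : ℝ,
      D t = (A * Real.cos t + B * Real.sin t) ^ 2
              + (2 * (1 - b) + B * Real.cos t - A * Real.sin t) ^ 2
        ∧ D t > 0 := by
  have hcos : cos a ≠ 0 := (cos_pos_of_mem_Ioo (abs_lt.mp ha)).ne'
  have hs : 2 * b - 1 ≠ 0 := fun h => hb2 (by linarith)
  have hAB : A ^ 2 + B ^ 2 ≠ (2 * (1 - b)) ^ 2 := by
    rw [hA, hB, sin_two_mul_sq_add_add_cos_two_mul_sq]
    intro h
    exact mul_ne_zero (mul_ne_zero four_ne_zero hs) (pow_ne_zero 2 hcos) (by linear_combination h)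
  intro t
  have hsq : D t = (A * cos t + B * sin t) ^ 2 + (2 * (1 - b) + B * cos t - A * sin t) ^ 2 := by
    rw [hD, ← sq_add_sq_add_two_mul_rotate]
    ring
  exact ⟨hsq, hsq ▸ rotate_sq_add_sq_pos hAB t⟩

/-- With `A = sin 2a`, `B = 2b - 1 + cos 2a` and
`D t = A² + B² + 4(1-b)(B cos t - A sin t) + 4(1-b)²`, for all `t` one has
`D t = (A cos t + B sin t)² + (2(1-b) + B cos t - A sin t)²` and `D t > 0`:
the two squares never vanish simultaneously. -/
theorem denominator_positive (a b : ℝ)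
    (ha : |a| < Real.pi / 2) (hb2 : b ≠ 1 / 2) (hb1 : b ≠ 1)
    (hab : |a| + |b| > 0)
    (A B : ℝ) (hA : A = Real.sin (2 * a)) (hB : B = 2 * b - 1 + Real.cos (2 * a))
    (D : ℝ → ℝ)
    (hD : ∀ t : ℝ, D t =
      A ^ 2 + B ^ 2 + 4 * (1 - b) * (B * Real.cos t - A * Real.sin t)
        + 4 * (1 - b) ^ 2) :
    ∀ t : ℝ,
      D t = (A * Real.cos t + B * Real.sin t) ^ 2
              + (2 * (1 - b) + B * Real.cos t - A * Real.sin t) ^ 2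
        ∧ D t > 0 :=
  denominator_positive_general a b ha hb2 A B hA hB D hD
end

section
/- At every t ∈ ℝ with 2(1 − b) + B cos t − A sin t ≠ 0, the function X is differentiable and satisfies X'(t) = (1 + X(t)²)·v(t); moreover X(0) = tan a and v(0) = b. -/
/-!
Write `X = f / g` with `f = A cos t + B sin t`, `g = 2(1-b) + B cos t - A sin t`. Then
`f' = g - 2(1-b)`, `g' = -f` and `f² + g² = D`, so `1 + X² = D / g²` and
`X' = (D - 2(1-b) g) / g² = (1 + X²) (1/2 + (A² + B² - 4(1-b)²) / (2D))`.
The double-angle identity `sin² 2a + (1 + cos 2a)² = 4 cos² a` gives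
`A² + B² - 4(1-b)² = 4(2b-1) cos² a`, which is the claim; at `t = 0` the same identity
gives `D 0 = 4 cos² a`.
-/

open Real

theorem sin_two_mul_div_one_add_cos_two_mul (x : ℝ) :
    sin (2 * x) / (1 + cos (2 * x)) = tan x := by
  rw [tan_eq_sin_div_cos, sin_two_mul, cos_two_mul]
  by_cases hx : cos x = 0
  · simp [hx]
  · field_simp
    ring

theorem sin_two_mul_sq_add_one_add_cos_two_mul_sq (x : ℝ) :
    sin (2 * x) ^ 2 + (1 + cos (2 * x)) ^ 2 = 4 * cos x ^ 2 := by
  rw [sin_two_mul, cos_two_mul]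
  linear_combination 4 * cos x ^ 2 * sin_sq_add_cos_sq x

section Sinusoid

variable (p q r t : ℝ)

theorem sinusoid_sq_add_sq :
    (r + q * cos t - p * sin t) ^ 2 + (p * cos t + q * sin t) ^ 2
      = p ^ 2 + q ^ 2 + 2 * r * (q * cos t - p * sin t) + r ^ 2 := by
  linear_combination (p ^ 2 + q ^ 2) * sin_sq_add_cos_sq t

theorem hasDerivAt_sinusoid_div (ht : r + q * cos t - p * sin t ≠ 0) :
    HasDerivAt (fun s => (p * cos s + q * sin s) / (r + q * cos s - p * sin s))
      (1 + ((p * cos t + q * sin t) / (r + q * cos t - p * sin t)) ^ 2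
        - r / (r + q * cos t - p * sin t)) t := by
  have hf : HasDerivAt (fun s => p * cos s + q * sin s) (p * -sin t + q * cos t) t :=
    ((hasDerivAt_cos t).const_mul p).add ((hasDerivAt_sin t).const_mul q)
  have hg : HasDerivAt (fun s => r + q * cos s - p * sin s) (q * -sin t - p * cos t) t :=
    (((hasDerivAt_cos t).const_mul q).const_add r).sub ((hasDerivAt_sin t).const_mul p)
  refine (hf.div hg ht).congr_deriv ?_
  field_simp
  ring

theorem hasDerivAt_sinusoid_div_eq_riccati (ht : r + q * cos t - p * sin t ≠ 0) :
    HasDerivAt (fun s => (p * cos s + q * sin s) / (r + q * cos s - p * sin s))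
      ((1 + ((p * cos t + q * sin t) / (r + q * cos t - p * sin t)) ^ 2)
        * (1 / 2 + (p ^ 2 + q ^ 2 - r ^ 2) / 2
          / (p ^ 2 + q ^ 2 + 2 * r * (q * cos t - p * sin t) + r ^ 2))) t := by
  refine (hasDerivAt_sinusoid_div p q r t ht).congr_deriv ?_
  have hD := sinusoid_sq_add_sq p q r t
  have hpqr : p ^ 2 + q ^ 2 - r ^ 2
      = (r + q * cos t - p * sin t) ^ 2 + (p * cos t + q * sin t) ^ 2
        - 2 * r * (r + q * cos t - p * sin t) := by
    linear_combination -hD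
  rw [hpqr, ← hD]
  set f := p * cos t + q * sin t
  set g := r + q * cos t - p * sin t
  have hfg : g ^ 2 + f ^ 2 ≠ 0 := by positivity
  field_simp
  ring

end Sinusoid

theorem X_derivative_general (a b : ℝ)
    (ha : |a| < Real.pi / 2)
    (A B : ℝ) (hA : A = Real.sin (2 * a)) (hB : B = 2 * b - 1 + Real.cos (2 * a))
    (D v X : ℝ → ℝ)
    (hD : ∀ t : ℝ, D t =
      A ^ 2 + B ^ 2 + 4 * (1 - b) * (B * Real.cos t - A * Real.sin t)
        + 4 * (1 - b) ^ 2)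
    (hv : ∀ t : ℝ, v t = 1 / 2 + 2 * (2 * b - 1) * Real.cos a ^ 2 / D t)
    (hX : ∀ t : ℝ, X t =
      (A * Real.cos t + B * Real.sin t)
        / (2 * (1 - b) + B * Real.cos t - A * Real.sin t)) :
    (∀ t : ℝ, 2 * (1 - b) + B * Real.cos t - A * Real.sin t ≠ 0 →
        DifferentiableAt ℝ X t ∧ deriv X t = (1 + X t ^ 2) * v t)
      ∧ X 0 = Real.tan a ∧ v 0 = b := by
  have hcos : cos a ≠ 0 := (cos_pos_of_mem_Ioo (abs_lt.mp ha)).ne'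
  have hAB : A ^ 2 + B ^ 2 - (2 * (1 - b)) ^ 2 = 4 * (2 * b - 1) * cos a ^ 2 := by
    rw [hA, hB]
    linear_combination sin_two_mul_sq_add_one_add_cos_two_mul_sq a - 4 * (1 - b) * cos_two_mul a
  refine ⟨fun t ht => ?_, ?_, ?_⟩
  · have hd := hasDerivAt_sinusoid_div_eq_riccati A B (2 * (1 - b)) t ht
    rw [← funext hX] at hd
    refine ⟨hd.differentiableAt, hd.deriv.trans ?_⟩
    rw [hX, hv, hD, hAB]
    ring
  · rw [hX, cos_zero, sin_zero, hA, ← sin_two_mul_div_one_add_cos_two_mul, hB]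
    ring
  · have hD0 : D 0 = 4 * cos a ^ 2 := by
      rw [hD, hA, hB, cos_zero, sin_zero]
      linear_combination sin_two_mul_sq_add_one_add_cos_two_mul_sq a
    rw [hv, hD0]
    field_simp
    ring

/-- With `A = sin 2a`, `B = 2b - 1 + cos 2a`,
`D t = A² + B² + 4(1-b)(B cos t - A sin t) + 4(1-b)²`,
`v t = 1/2 + 2(2b-1) cos² a / D t` and
`X t = (A cos t + B sin t) / (2(1-b) + B cos t - A sin t)`:
at every `t` where the denominator of `X` does not vanish, `X` is
differentiable and `X'(t) = (1 + X(t)²) v(t)`; moreover `X 0 = tan a` and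
`v 0 = b`. -/
theorem X_derivative (a b : ℝ)
    (ha : |a| < Real.pi / 2) (hb2 : b ≠ 1 / 2) (hb1 : b ≠ 1)
    (hab : |a| + |b| > 0)
    (A B : ℝ) (hA : A = Real.sin (2 * a)) (hB : B = 2 * b - 1 + Real.cos (2 * a))
    (D v X : ℝ → ℝ)
    (hD : ∀ t : ℝ, D t =
      A ^ 2 + B ^ 2 + 4 * (1 - b) * (B * Real.cos t - A * Real.sin t)
        + 4 * (1 - b) ^ 2)
    (hv : ∀ t : ℝ, v t = 1 / 2 + 2 * (2 * b - 1) * Real.cos a ^ 2 / D t)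
    (hX : ∀ t : ℝ, X t =
      (A * Real.cos t + B * Real.sin t)
        / (2 * (1 - b) + B * Real.cos t - A * Real.sin t)) :
    (∀ t : ℝ, 2 * (1 - b) + B * Real.cos t - A * Real.sin t ≠ 0 →
        DifferentiableAt ℝ X t ∧ deriv X t = (1 + X t ^ 2) * v t)
      ∧ X 0 = Real.tan a ∧ v 0 = b :=
  X_derivative_general a b ha A B hA hB D v X hD hv hX
end

section
/- Suppose b < 1/2 and let x : ℝ → ℝ be a differentiable function with x'(t) = v(t) for all t (for instance x(t) = a + ∫₀ᵗ v(s) ds). Then x is periodic of period 2π: x(t + 2π) = x(t) for all t ∈ ℝ. -/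
/-!
The function `x` differs by a constant from the continuous argument `t ↦ arg (c + (B + A i) e^{it})`
with `c = 2(1 - b)`: the derivative of this argument is `v`, because
`D t = |c + (B + A i) e^{it}|²` and `A² + B² - c² = 4(2b - 1) cos² a`. For `b < 1/2` the last
quantity is negative, so the circle `c + (B + A i) e^{it}` stays in the half-plane `Re > 0`,
winds zero times around the origin, and its argument is `2π`-periodic.
-/

open Real

theorem Function.Periodic.of_deriv_eq {𝕜 G : Type*} [RCLike 𝕜] [NormedAddCommGroup G]
    [NormedSpace 𝕜 G] {f g : 𝕜 → G} {T : 𝕜} (hg : Function.Periodic g T)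
    (hf_diff : Differentiable 𝕜 f) (hg_diff : Differentiable 𝕜 g) (h : deriv f = deriv g) :
    Function.Periodic f T := by
  obtain ⟨k, hk⟩ := isOpen_univ.exists_eq_add_of_deriv_eq isPreconnected_univ
    hf_diff.differentiableOn hg_diff.differentiableOn (fun t _ => congrFun h t)
  intro t
  rw [hk (Set.mem_univ _), hk (Set.mem_univ _)]
  exact congrArg (· + k) (hg t)

theorem HasDerivAt.arctan_div {f g : ℝ → ℝ} {f' g' t : ℝ} (hf : HasDerivAt f f' t)
    (hg : HasDerivAt g g' t) (h : g t ≠ 0) :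
    HasDerivAt (fun s => Real.arctan (f s / g s))
      ((f' * g t - f t * g') / (g t ^ 2 + f t ^ 2)) t := by
  refine (hf.div hg h).arctan.congr_deriv ?_
  simp only [Pi.div_apply]
  field_simp

section CircleArg

variable (c p q : ℝ)

/-- The argument of `c + (p + q i) e^{it}` up to a multiple of `π`; it is continuous in `t` when
`p ^ 2 + q ^ 2 < c ^ 2`, since then the real part never vanishes. -/
noncomputable def circleArg (t : ℝ) : ℝ :=
  arctan ((p * sin t + q * cos t) / (c + (p * cos t - q * sin t)))

theorem circleArg_periodic : Function.Periodic (circleArg c p q) (2 * π) := by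
  intro t
  simp only [circleArg, sin_add_two_pi, cos_add_two_pi]

variable {c p q}

theorem add_mul_cos_sub_mul_sin_ne_zero (h : p ^ 2 + q ^ 2 < c ^ 2) (t : ℝ) :
    c + (p * cos t - q * sin t) ≠ 0 := by
  intro h0
  have hcirc : (p * cos t - q * sin t) ^ 2 + (p * sin t + q * cos t) ^ 2 = p ^ 2 + q ^ 2 := by
    linear_combination (p ^ 2 + q ^ 2) * sin_sq_add_cos_sq t
  rw [eq_neg_of_add_eq_zero_right h0] at hcirc
  nlinarith [sq_nonneg (p * sin t + q * cos t)]

theorem hasDerivAt_circleArg (h : p ^ 2 + q ^ 2 < c ^ 2) (t : ℝ) :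
    HasDerivAt (circleArg c p q)
      (1 / 2 + (p ^ 2 + q ^ 2 - c ^ 2) / 2 /
        (p ^ 2 + q ^ 2 + 2 * c * (p * cos t - q * sin t) + c ^ 2)) t := by
  have hN : HasDerivAt (fun s => p * sin s + q * cos s) (p * cos t - q * sin t) t :=
    (((hasDerivAt_sin t).const_mul p).add ((hasDerivAt_cos t).const_mul q)).congr_deriv
      (by ring)
  have hM : HasDerivAt (fun s => c + (p * cos s - q * sin s)) (-(p * sin t + q * cos t)) t :=
    ((((hasDerivAt_cos t).const_mul p).sub ((hasDerivAt_sin t).const_mul q)).const_add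
      c).congr_deriv (by ring)
  have hM0 := add_mul_cos_sub_mul_sin_ne_zero h t
  have habs : (c + (p * cos t - q * sin t)) ^ 2 + (p * sin t + q * cos t) ^ 2
      = p ^ 2 + q ^ 2 + 2 * c * (p * cos t - q * sin t) + c ^ 2 := by
    linear_combination (p ^ 2 + q ^ 2) * sin_sq_add_cos_sq t
  refine (hN.arctan_div hM hM0).congr_deriv ?_
  rw [← habs]
  field_simp
  linear_combination (p ^ 2 + q ^ 2) * sin_sq_add_cos_sq t

end CircleArg

theorem solution_periodic_general (a b : ℝ)
    (ha : |a| < Real.pi / 2) (hbb : b < 1 / 2)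
    (A B : ℝ) (hA : A = Real.sin (2 * a)) (hB : B = 2 * b - 1 + Real.cos (2 * a))
    (D v : ℝ → ℝ)
    (hD : ∀ t : ℝ, D t =
      A ^ 2 + B ^ 2 + 4 * (1 - b) * (B * Real.cos t - A * Real.sin t)
        + 4 * (1 - b) ^ 2)
    (hv : ∀ t : ℝ, v t = 1 / 2 + 2 * (2 * b - 1) * Real.cos a ^ 2 / D t)
    (x : ℝ → ℝ) (hx : Differentiable ℝ x) (hxv : ∀ t : ℝ, deriv x t = v t) :
    ∀ t : ℝ, x (t + 2 * Real.pi) = x t := by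
  set c := 2 * (1 - b)
  have hcos : 0 < cos a := cos_pos_of_mem_Ioo (abs_lt.mp ha)
  have hdisc : B ^ 2 + A ^ 2 - c ^ 2 = 4 * (2 * b - 1) * cos a ^ 2 := by
    rw [hA, hB]
    linear_combination sin_sq_add_cos_sq (2 * a) + 2 * (2 * b - 1) * cos_two_mul a
  have hinside : B ^ 2 + A ^ 2 < c ^ 2 := by nlinarith [mul_pos hcos hcos]
  have hderiv : ∀ t, HasDerivAt (circleArg c B A) (v t) t := by
    intro t
    convert hasDerivAt_circleArg hinside t using 1
    rw [hv, hD, hdisc]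
    simp only [c]
    ring
  refine (circleArg_periodic c B A).of_deriv_eq hx (fun t => (hderiv t).differentiableAt) ?_
  funext t
  rw [hxv, (hderiv t).deriv]

/-- For `b < 1/2`: if `x : ℝ → ℝ` is differentiable with `x' = v`, where
`v t = 1/2 + 2(2b-1) cos² a / D t` and
`D t = A² + B² + 4(1-b)(B cos t - A sin t) + 4(1-b)²` with `A = sin 2a`,
`B = 2b - 1 + cos 2a`, then `x` is periodic of period `2π`. -/
theorem solution_periodic (a b : ℝ)
    (ha : |a| < Real.pi / 2) (hb2 : b ≠ 1 / 2) (hb1 : b ≠ 1)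
    (hab : |a| + |b| > 0) (hbb : b < 1 / 2)
    (A B : ℝ) (hA : A = Real.sin (2 * a)) (hB : B = 2 * b - 1 + Real.cos (2 * a))
    (D v : ℝ → ℝ)
    (hD : ∀ t : ℝ, D t =
      A ^ 2 + B ^ 2 + 4 * (1 - b) * (B * Real.cos t - A * Real.sin t)
        + 4 * (1 - b) ^ 2)
    (hv : ∀ t : ℝ, v t = 1 / 2 + 2 * (2 * b - 1) * Real.cos a ^ 2 / D t)
    (x : ℝ → ℝ) (hx : Differentiable ℝ x) (hxv : ∀ t : ℝ, deriv x t = v t) :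
    ∀ t : ℝ, x (t + 2 * Real.pi) = x t :=
  solution_periodic_general a b ha hbb A B hA hB D v hD hv x hx hxv
end

section
/- Suppose b > 1/2 and b ≠ 1, and let x : ℝ → ℝ be a differentiable function with x'(t) = v(t) for all t (for instance x(t) = a + ∫₀ᵗ v(s) ds). Then the function t ↦ x(t) − t is periodic of period 2π: x(t + 2π) = x(t) + 2π for all t ∈ ℝ; in particular x is unbounded and not periodic. -/
/-!
Writing `ζ = B + A i` and `r = 2(1 - b)`, one has `D(t) = |ζ e^{it} + r|²` and
`|ζ|² = r² + 4(2b - 1) cos² a > r²`, so that `v(t) = (1 + P(e^{it})) / 2`, where `P` is the Poisson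
kernel of the unit disc at the point `w = -r / ζ`, which lies in the disc. By the Poisson integral
formula for the constant function `1`, the Poisson kernel has mean `1` on the circle, so `x` grows
by exactly `2π` over every period. Hence `x - id` is continuous and periodic, thus bounded, so `x`
is unbounded and, being continuous, cannot be periodic.
-/

open Complex Real Metric

section PoissonKernel

variable {c w : ℂ} {R : ℝ}

theorem integral_poissonKernel_circleMap (hw : w ∈ ball c R) :
    ∫ θ in 0..2 * π, poissonKernel c w (circleMap c R θ) = 2 * π := by
  have hmean := (diffContOnCl_const (c := (1 : ℂ))).circleAverage_poissonKernel_smul hw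
  simp only [circleAverage_def, Pi.smul_apply', real_smul, mul_one,
    intervalIntegral.integral_ofReal] at hmean
  rw [← ofReal_mul, ofReal_eq_one, inv_mul_eq_one₀ (by positivity)] at hmean
  exact hmean.symm

theorem continuous_poissonKernel_circleMap (hw : w ∈ ball c R) :
    Continuous fun θ => poissonKernel c w (circleMap c R θ) := by
  rw [poissonKernel_eq_re_herglotzRieszKernel]
  exact continuous_re.comp ((continuousOn_herglotzRieszKernel_sphere hw).comp_continuous
    (continuous_circleMap c R) (circleMap_mem_sphere' c R))

theorem map_add_two_pi_of_deriv_eq_poissonKernel (hw : w ∈ ball c R) {x : ℝ → ℝ}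
    (hx : Differentiable ℝ x) {α β : ℝ}
    (hxv : ∀ t, deriv x t = α + β * poissonKernel c w (circleMap c R t)) (t : ℝ) :
    x (t + 2 * π) = x t + 2 * π * (α + β) := by
  have hP := continuous_poissonKernel_circleMap hw
  have hper : Function.Periodic (fun θ => poissonKernel c w (circleMap c R θ)) (2 * π) :=
    fun θ => by simp only [periodic_circleMap c R θ]
  have hmean : ∫ θ in t..t + 2 * π, poissonKernel c w (circleMap c R θ) = 2 * π := by
    rw [hper.intervalIntegral_add_eq t 0, zero_add, integral_poissonKernel_circleMap hw]
  have hftc := intervalIntegral.integral_eq_sub_of_hasDerivAt (a := t) (b := t + 2 * π)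
    (fun θ _ => (hx θ).hasDerivAt)
    (by rw [funext hxv]; exact (by fun_prop : Continuous _).intervalIntegrable _ _)
  rw [funext hxv, intervalIntegral.integral_add intervalIntegrable_const
    ((hP.intervalIntegrable _ _).const_mul β), intervalIntegral.integral_const_mul, hmean,
    intervalIntegral.integral_const] at hftc
  simp only [add_sub_cancel_left, smul_eq_mul] at hftc
  linarith

end PoissonKernel

theorem poissonKernel_neg_div_circleMap (ζ : ℂ) (hζ : ζ ≠ 0) (r t : ℝ) :
    poissonKernel 0 (-r / ζ) (circleMap 0 1 t) =
      (normSq ζ - r ^ 2) / normSq (ζ * cexp (t * I) + r) := by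
  have hn : normSq ζ ≠ 0 := normSq_eq_zero.not.mpr hζ
  have hsub : cexp (t * I) - -r / ζ = (ζ * cexp (t * I) + r) / ζ := by field_simp; ring
  simp only [poissonKernel_def, circleMap_zero, ofReal_one, one_mul, sub_zero, hsub,
    norm_exp_ofReal_mul_I, ← normSq_eq_norm_sq, normSq_div, normSq_neg, normSq_ofReal]
  field_simp

theorem normSq_mul_exp_add_ofReal (A B r t : ℝ) :
    normSq ((B + A * I) * cexp (t * I) + r) =
      A ^ 2 + B ^ 2 + 2 * r * (B * Real.cos t - A * Real.sin t) + r ^ 2 := by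
  simp only [normSq_apply, add_re, add_im, mul_re, mul_im, exp_ofReal_mul_I_re,
    exp_ofReal_mul_I_im, ofReal_re, ofReal_im, I_re, I_im]
  linear_combination (A ^ 2 + B ^ 2) * Real.sin_sq_add_cos_sq t

theorem sin_two_mul_sq_add_sq (a b : ℝ) :
    Real.sin (2 * a) ^ 2 + (2 * b - 1 + Real.cos (2 * a)) ^ 2 =
      (2 * (1 - b)) ^ 2 + 4 * (2 * b - 1) * Real.cos a ^ 2 := by
  have h := Real.sin_sq_add_cos_sq (2 * a)
  rw [Real.cos_two_mul] at h ⊢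
  linear_combination h

theorem Function.Periodic.exists_abs_le {f : ℝ → ℝ} {p : ℝ} (hf : Function.Periodic f p)
    (hp : p ≠ 0) (hc : Continuous f) : ∃ M, ∀ t, |f t| ≤ M := by
  obtain ⟨M, hM⟩ := isBounded_iff_forall_norm_le.mp (hf.isBounded_of_continuous hp hc)
  exact ⟨M, fun t => hM _ ⟨t, rfl⟩⟩

theorem not_exists_abs_le_of_map_add_eq_add {x : ℝ → ℝ} (hx : Continuous x) {p : ℝ}
    (hp : p ≠ 0) (h : ∀ t, x (t + p) = x t + p) : ¬ ∃ M, ∀ t, |x t| ≤ M := by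
  rintro ⟨M, hM⟩
  obtain ⟨N, hN⟩ := Function.Periodic.exists_abs_le (f := fun t => x t - t)
    (fun t => by simp only [h]; ring) hp (by fun_prop)
  have hxN := abs_le.mp (hN (M + N + 1))
  have hxM := abs_le.mp (hM (M + N + 1))
  linarith [hxN.1, hxM.2]

theorem not_exists_periodic_of_not_exists_abs_le {x : ℝ → ℝ} (hx : Continuous x)
    (hunb : ¬ ∃ M, ∀ t, |x t| ≤ M) : ¬ ∃ T : ℝ, T > 0 ∧ ∀ t, x (t + T) = x t := by
  rintro ⟨T, hT, hper⟩
  exact hunb (Function.Periodic.exists_abs_le hper hT.ne' hx)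

theorem solution_quasiperiodic_general (a b : ℝ)
    (ha : |a| < Real.pi / 2) (hbb : b > 1 / 2)
    (A B : ℝ) (hA : A = Real.sin (2 * a)) (hB : B = 2 * b - 1 + Real.cos (2 * a))
    (D v : ℝ → ℝ)
    (hD : ∀ t : ℝ, D t =
      A ^ 2 + B ^ 2 + 4 * (1 - b) * (B * Real.cos t - A * Real.sin t)
        + 4 * (1 - b) ^ 2)
    (hv : ∀ t : ℝ, v t = 1 / 2 + 2 * (2 * b - 1) * Real.cos a ^ 2 / D t)
    (x : ℝ → ℝ) (hx : Differentiable ℝ x) (hxv : ∀ t : ℝ, deriv x t = v t) :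
    (∀ t : ℝ, x (t + 2 * Real.pi) = x t + 2 * Real.pi) ∧
      (¬ ∃ M : ℝ, ∀ t : ℝ, |x t| ≤ M) ∧
      (¬ ∃ T : ℝ, T > 0 ∧ ∀ t : ℝ, x (t + T) = x t) := by
  set ζ : ℂ := B + A * I
  have hnormSq : normSq ζ = (2 * (1 - b)) ^ 2 + 4 * (2 * b - 1) * Real.cos a ^ 2 := by
    rw [normSq_add_mul_I, hA, hB, add_comm, sin_two_mul_sq_add_sq]
  have hK : 0 < 4 * (2 * b - 1) * Real.cos a ^ 2 := by
    have := Real.cos_pos_of_mem_Ioo (abs_lt.mp ha)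
    have : 0 < 2 * b - 1 := by linarith
    positivity
  have hζ : ζ ≠ 0 := fun h => by
    rw [h, map_zero] at hnormSq
    nlinarith
  have hw : -((2 * (1 - b) : ℝ) : ℂ) / ζ ∈ ball (0 : ℂ) 1 := by
    rw [mem_ball_zero_iff, norm_div, norm_neg, norm_real, div_lt_one (norm_pos_iff.mpr hζ),
      ← sq_lt_sq₀ (norm_nonneg _) (norm_nonneg _), ← normSq_eq_norm_sq, Real.norm_eq_abs, sq_abs]
    linarith
  have hvP : ∀ t, deriv x t =
      1 / 2 + 1 / 2 * poissonKernel 0 (-((2 * (1 - b) : ℝ) : ℂ) / ζ) (circleMap 0 1 t) := by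
    intro t
    rw [hxv, hv, hD, poissonKernel_neg_div_circleMap ζ hζ, normSq_mul_exp_add_ofReal, hnormSq]
    ring
  have hper : ∀ t, x (t + 2 * π) = x t + 2 * π := fun t => by
    rw [map_add_two_pi_of_deriv_eq_poissonKernel hw hx hvP]
    ring
  have hunb := not_exists_abs_le_of_map_add_eq_add hx.continuous (by positivity) hper
  exact ⟨hper, hunb, not_exists_periodic_of_not_exists_abs_le hx.continuous hunb⟩

/-- For `b > 1/2`, `b ≠ 1`: if `x : ℝ → ℝ` is differentiable with `x' = v`,
where `v t = 1/2 + 2(2b-1) cos² a / D t` and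
`D t = A² + B² + 4(1-b)(B cos t - A sin t) + 4(1-b)²` with `A = sin 2a`,
`B = 2b - 1 + cos 2a`, then `t ↦ x t - t` is `2π`-periodic, i.e.
`x (t + 2π) = x t + 2π` for all `t`; in particular `x` is unbounded and
not periodic. -/
theorem solution_quasiperiodic (a b : ℝ)
    (ha : |a| < Real.pi / 2) (hb2 : b ≠ 1 / 2) (hb1 : b ≠ 1)
    (hab : |a| + |b| > 0) (hbb : b > 1 / 2)
    (A B : ℝ) (hA : A = Real.sin (2 * a)) (hB : B = 2 * b - 1 + Real.cos (2 * a))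
    (D v : ℝ → ℝ)
    (hD : ∀ t : ℝ, D t =
      A ^ 2 + B ^ 2 + 4 * (1 - b) * (B * Real.cos t - A * Real.sin t)
        + 4 * (1 - b) ^ 2)
    (hv : ∀ t : ℝ, v t = 1 / 2 + 2 * (2 * b - 1) * Real.cos a ^ 2 / D t)
    (x : ℝ → ℝ) (hx : Differentiable ℝ x) (hxv : ∀ t : ℝ, deriv x t = v t) :
    (∀ t : ℝ, x (t + 2 * Real.pi) = x t + 2 * Real.pi) ∧
      (¬ ∃ M : ℝ, ∀ t : ℝ, |x t| ≤ M) ∧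
      (¬ ∃ T : ℝ, T > 0 ∧ ∀ t : ℝ, x (t + T) = x t) :=
  solution_quasiperiodic_general a b ha hbb A B hA hB D v hD hv x hx hxv
end

section
/- Case b > 1/2, b ≠ 1: one has A² + B² > 4(1 − b)², and consequently the trigonometric equation B cos t − A sin t = 2(b − 1) has a real solution; in fact it has a smallest positive root t₀, and its solution set is an unbounded increasing sequence (t_j), j ∈ ℤ. -/
/-!
Expanding with `cos 2a = 2 cos² a - 1` gives `A² + B² - 4(1 - b)² = 4(2b - 1) cos² a > 0`.
Writing `B cos t - A sin t = R cos (t + φ)` with `R = √(A² + B²) > |2(b - 1)|`, the equation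
becomes `cos (t + φ) = cos θ` for some `θ ∈ (0, π)`. Its roots `2kπ ± θ - φ`, listed alternately,
form a sequence with `t_j + φ ∈ (π(j - 1), πj)`, which makes it strictly increasing and
unbounded in both directions.
-/

open Real Set

lemma sin_two_mul_sq_add_sq_eq (a b : ℝ) :
    sin (2 * a) ^ 2 + (2 * b - 1 + cos (2 * a)) ^ 2
      = 4 * (1 - b) ^ 2 + 4 * (2 * b - 1) * cos a ^ 2 := by
  have hpyth := sin_sq_add_cos_sq (2 * a)
  rw [cos_two_mul] at hpyth ⊢
  linear_combination hpyth

lemma exists_mul_cos_sub_mul_sin_eq_sqrt_mul_cos_add (A B : ℝ) :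
    ∃ φ : ℝ, ∀ t, B * cos t - A * sin t = √(A ^ 2 + B ^ 2) * cos (t + φ) := by
  set z : ℂ := ⟨B, A⟩
  have hz : ‖z‖ = √(A ^ 2 + B ^ 2) := by
    rw [Complex.norm_def, Complex.normSq_mk, add_comm]; ring_nf
  refine ⟨z.arg, fun t => ?_⟩
  have hre : ‖z‖ * cos z.arg = B := Complex.norm_mul_cos_arg z
  have him : ‖z‖ * sin z.arg = A := Complex.norm_mul_sin_arg z
  rw [cos_add, ← hz]
  linear_combination sin t * him - cos t * hre

/-- The roots of `cos x = cos θ`: `2kπ - θ` at index `2k` and `2kπ + θ` at index `2k + 1`. -/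
noncomputable def cosEqCosRoots (θ : ℝ) (j : ℤ) : ℝ :=
  if Even j then π * j - θ else π * (j - 1) + θ

section cosEqCosRoots

variable {θ : ℝ}

lemma cosEqCosRoots_mem_Ioo (h₀ : 0 < θ) (hπ : θ < π) (j : ℤ) :
    cosEqCosRoots θ j ∈ Ioo (π * (j - 1)) (π * j) := by
  unfold cosEqCosRoots
  split_ifs <;> constructor <;> linarith

lemma strictMono_cosEqCosRoots (h₀ : 0 < θ) (hπ : θ < π) : StrictMono (cosEqCosRoots θ) :=
  strictMono_int_of_lt_succ fun j => by
    have h := (cosEqCosRoots_mem_Ioo h₀ hπ j).2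
    have h' := (cosEqCosRoots_mem_Ioo h₀ hπ (j + 1)).1
    push_cast at h'
    linarith

lemma cosEqCosRoots_two_mul (k : ℤ) : cosEqCosRoots θ (2 * k) = 2 * k * π - θ := by
  rw [cosEqCosRoots, if_pos (even_two_mul k)]
  push_cast; ring

lemma cosEqCosRoots_two_mul_add_one (k : ℤ) :
    cosEqCosRoots θ (2 * k + 1) = 2 * k * π + θ := by
  rw [cosEqCosRoots, if_neg k.not_even_two_mul_add_one]
  push_cast; ring

lemma cos_eq_cos_iff_mem_range_cosEqCosRoots {x : ℝ} :
    cos x = cos θ ↔ x ∈ range (cosEqCosRoots θ) := by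
  rw [eq_comm, cos_eq_cos_iff]
  constructor
  · rintro ⟨k, hk | hk⟩
    · exact ⟨2 * k + 1, by rw [cosEqCosRoots_two_mul_add_one]; linarith⟩
    · exact ⟨2 * k, by rw [cosEqCosRoots_two_mul]; linarith⟩
  · rintro ⟨j, rfl⟩
    obtain ⟨k, rfl | rfl⟩ := Int.even_or_odd' j
    · exact ⟨k, Or.inr (by rw [cosEqCosRoots_two_mul])⟩
    · exact ⟨k, Or.inl (by rw [cosEqCosRoots_two_mul_add_one])⟩

end cosEqCosRoots

lemma not_bddAbove_range_of_forall_lt {f : ℤ → ℝ} {c d : ℝ} (hc : 0 < c)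
    (h : ∀ j, c * j + d < f j) : ¬ BddAbove (range f) := by
  rw [not_bddAbove_iff]
  intro x
  obtain ⟨j, hj⟩ := exists_int_gt ((x - d) / c)
  have := (div_lt_iff₀ hc).1 hj
  exact ⟨f j, ⟨j, rfl⟩, by linarith [h j]⟩

lemma not_bddBelow_range_of_forall_lt {f : ℤ → ℝ} {c d : ℝ} (hc : 0 < c)
    (h : ∀ j, f j < c * j + d) : ¬ BddBelow (range f) := by
  rw [not_bddBelow_iff]
  intro x
  obtain ⟨j, hj⟩ := exists_int_lt ((x - d) / c)
  have := (lt_div_iff₀ hc).1 hj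
  exact ⟨f j, ⟨j, rfl⟩, by linarith [h j]⟩

lemma exists_strictMono_range_eq_setOf_mul_cos_sub_mul_sin_eq {A B c : ℝ} (h : c ^ 2 < A ^ 2 + B ^ 2) :
    ∃ ts : ℤ → ℝ, StrictMono ts ∧ {t | B * cos t - A * sin t = c} = range ts ∧
      ¬ BddAbove (range ts) ∧ ¬ BddBelow (range ts) := by
  obtain ⟨φ, hφ⟩ := exists_mul_cos_sub_mul_sin_eq_sqrt_mul_cos_add A B
  set R := √(A ^ 2 + B ^ 2)
  have hcR : |c| < R := by
    rw [← sqrt_sq_eq_abs]; exact sqrt_lt_sqrt (sq_nonneg c) h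
  have hR : 0 < R := (abs_nonneg c).trans_lt hcR
  obtain ⟨hlo, hhi⟩ : -1 < c / R ∧ c / R < 1 := by
    rw [← abs_lt, abs_div, abs_of_pos hR, div_lt_one hR]; exact hcR
  set θ := arccos (c / R)
  have hθ₀ : 0 < θ := arccos_pos.2 hhi
  have hθπ : θ < π := arccos_lt_pi.2 hlo
  have hmem j := cosEqCosRoots_mem_Ioo hθ₀ hθπ j
  refine ⟨fun j => cosEqCosRoots θ j - φ,
    (strictMono_cosEqCosRoots hθ₀ hθπ).add_const (-φ), ?_,
    not_bddAbove_range_of_forall_lt (d := -π - φ) pi_pos fun j => ?_,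
    not_bddBelow_range_of_forall_lt (d := -φ) pi_pos fun j => ?_⟩
  · ext t
    have : B * cos t - A * sin t = c ↔ cos (t + φ) = cos θ := by
      rw [hφ, cos_arccos hlo.le hhi.le, eq_div_iff hR.ne', mul_comm]
    rw [mem_ofPred_eq, this, cos_eq_cos_iff_mem_range_cosEqCosRoots]
    simp only [mem_range, sub_eq_iff_eq_add]
  · linarith [(hmem j).1]
  · linarith [(hmem j).2]

lemma StrictMono.exists_least_gt {α : Type*} [LinearOrder α] {f : ℤ → α} (hf : StrictMono f)
    (habove : ¬ BddAbove (range f)) (hbelow : ¬ BddBelow (range f)) (a : α) :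
    ∃ j₀, a < f j₀ ∧ ∀ j, a < f j → f j₀ ≤ f j := by
  obtain ⟨_, ⟨n, rfl⟩, hn⟩ := not_bddAbove_iff.1 habove a
  obtain ⟨_, ⟨m, rfl⟩, hm⟩ := not_bddBelow_iff.1 hbelow a
  obtain ⟨j₀, hj₀, hmin⟩ := Int.exists_least_of_bdd (P := fun j => a < f j)
    ⟨m, fun j hj => (hf.lt_iff_lt.1 (hm.trans hj)).le⟩ ⟨n, hn⟩
  exact ⟨j₀, hj₀, fun j hj => hf.monotone (hmin j hj)⟩

theorem roots_of_trig_equation_general (a b : ℝ)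
    (ha : |a| < Real.pi / 2) (hbb : b > 1 / 2)
    (A B : ℝ) (hA : A = Real.sin (2 * a)) (hB : B = 2 * b - 1 + Real.cos (2 * a)) :
    A ^ 2 + B ^ 2 > 4 * (1 - b) ^ 2 ∧
      (∃ t₀ : ℝ, 0 < t₀ ∧ B * Real.cos t₀ - A * Real.sin t₀ = 2 * (b - 1) ∧
        ∀ t : ℝ, 0 < t → B * Real.cos t - A * Real.sin t = 2 * (b - 1) →
          t₀ ≤ t) ∧
      (∃ ts : ℤ → ℝ, StrictMono ts ∧
        {t : ℝ | B * Real.cos t - A * Real.sin t = 2 * (b - 1)} =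
          Set.range ts ∧
        ¬ BddAbove (Set.range ts) ∧ ¬ BddBelow (Set.range ts)) := by
  have hcos : 0 < cos a := cos_pos_of_mem_Ioo (abs_lt.1 ha)
  have hAB : A ^ 2 + B ^ 2 > 4 * (1 - b) ^ 2 := by
    rw [hA, hB, sin_two_mul_sq_add_sq_eq, gt_iff_lt, lt_add_iff_pos_right]
    have : 0 < 2 * b - 1 := by linarith
    positivity
  obtain ⟨ts, hmono, hroots, habove, hbelow⟩ :=
    exists_strictMono_range_eq_setOf_mul_cos_sub_mul_sin_eq
      (by linarith : (2 * (b - 1)) ^ 2 < A ^ 2 + B ^ 2)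
  obtain ⟨j₀, hj₀, hleast⟩ := hmono.exists_least_gt habove hbelow 0
  have hroot : ∀ {t}, B * cos t - A * sin t = 2 * (b - 1) ↔ t ∈ range ts := by
    intro t; rw [← hroots, mem_ofPred_eq]
  refine ⟨hAB, ⟨ts j₀, hj₀, hroot.2 ⟨j₀, rfl⟩, fun t ht hts => ?_⟩,
    ts, hmono, hroots, habove, hbelow⟩
  obtain ⟨j, rfl⟩ := hroot.1 hts
  exact hleast j ht

/-- Case `b > 1/2`, `b ≠ 1`: with `A = sin 2a` and `B = 2b - 1 + cos 2a` one
has `A² + B² > 4(1-b)²`; consequently the trigonometric equation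
`B cos t - A sin t = 2(b-1)` has a real solution, in fact a smallest positive
root `t₀`, and its full solution set is the range of a strictly increasing
sequence `(t_j)`, `j ∈ ℤ`, unbounded in both directions. -/
theorem roots_of_trig_equation (a b : ℝ)
    (ha : |a| < Real.pi / 2) (hb2 : b ≠ 1 / 2) (hb1 : b ≠ 1)
    (hab : |a| + |b| > 0) (hbb : b > 1 / 2)
    (A B : ℝ) (hA : A = Real.sin (2 * a)) (hB : B = 2 * b - 1 + Real.cos (2 * a)) :
    A ^ 2 + B ^ 2 > 4 * (1 - b) ^ 2 ∧
      (∃ t₀ : ℝ, 0 < t₀ ∧ B * Real.cos t₀ - A * Real.sin t₀ = 2 * (b - 1) ∧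
        ∀ t : ℝ, 0 < t → B * Real.cos t - A * Real.sin t = 2 * (b - 1) →
          t₀ ≤ t) ∧
      (∃ ts : ℤ → ℝ, StrictMono ts ∧
        {t : ℝ | B * Real.cos t - A * Real.sin t = 2 * (b - 1)} =
          Set.range ts ∧
        ¬ BddAbove (Set.range ts) ∧ ¬ BddBelow (Set.range ts)) :=
  roots_of_trig_equation_general a b ha hbb A B hA hB
end

section
/- Suppose b > 1/2 and b ≠ 1. If t₀ ∈ ℝ satisfies B cos t₀ − A sin t₀ = 2(b − 1) (i.e., the denominator 2(1 − b) + B cos t₀ − A sin t₀ of X vanishes), then v(t₀) = 1; that is, the orbit crosses the interface line x' = 1 exactly at the points where x is an odd integer multiple of π/2. -/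
open Real

/-! On the crossing set, `D t₀ = A² + B² - 4(1 - b)²`, and with `c = 2b - 1` this equals
`4 c cos² a`, exactly twice the numerator of the correction term in `v`; hence `v t₀ = 1/2 + 1/2`. -/

theorem sin_two_mul_sq_add_add_cos_two_mul_sq_sub_sq (a c : ℝ) :
    sin (2 * a) ^ 2 + (c + cos (2 * a)) ^ 2 - (1 - c) ^ 2 = 4 * c * cos a ^ 2 := by
  linear_combination sin_sq_add_cos_sq (2 * a) + 2 * c * cos_two_mul a

theorem crossing_interface_general (a b : ℝ)
    (ha : |a| < Real.pi / 2) (hb2 : b ≠ 1 / 2)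
    (A B : ℝ) (hA : A = Real.sin (2 * a)) (hB : B = 2 * b - 1 + Real.cos (2 * a))
    (D v : ℝ → ℝ)
    (hD : ∀ t : ℝ, D t =
      A ^ 2 + B ^ 2 + 4 * (1 - b) * (B * Real.cos t - A * Real.sin t)
        + 4 * (1 - b) ^ 2)
    (hv : ∀ t : ℝ, v t = 1 / 2 + 2 * (2 * b - 1) * Real.cos a ^ 2 / D t) :
    ∀ t₀ : ℝ, B * Real.cos t₀ - A * Real.sin t₀ = 2 * (b - 1) → v t₀ = 1 := by
  intro t₀ ht
  have hcos : cos a ≠ 0 := (cos_pos_of_mem_Ioo ⟨neg_lt_of_abs_lt ha, lt_of_abs_lt ha⟩).ne'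
  have hc : 2 * b - 1 ≠ 0 := by
    contrapose! hb2
    linarith
  have hD₀ : D t₀ = 4 * (2 * b - 1) * cos a ^ 2 := by
    rw [hD, ht, hA, hB]
    linear_combination sin_two_mul_sq_add_add_cos_two_mul_sq_sub_sq a (2 * b - 1)
  rw [hv, hD₀]
  field_simp
  ring

/-- Case `b > 1/2`, `b ≠ 1`: with `A = sin 2a`, `B = 2b - 1 + cos 2a`,
`D t = A² + B² + 4(1-b)(B cos t - A sin t) + 4(1-b)²` and
`v t = 1/2 + 2(2b-1) cos² a / D t`: if `t₀` satisfies
`B cos t₀ - A sin t₀ = 2(b-1)` (so the denominator of `X` vanishes at `t₀`),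
then `v t₀ = 1`; the orbit crosses the interface line `x' = 1` exactly at
the points where `x` is an odd multiple of `π/2`. -/
theorem crossing_interface (a b : ℝ)
    (ha : |a| < Real.pi / 2) (hb2 : b ≠ 1 / 2) (hb1 : b ≠ 1)
    (hab : |a| + |b| > 0) (hbb : b > 1 / 2)
    (A B : ℝ) (hA : A = Real.sin (2 * a)) (hB : B = 2 * b - 1 + Real.cos (2 * a))
    (D v : ℝ → ℝ)
    (hD : ∀ t : ℝ, D t =
      A ^ 2 + B ^ 2 + 4 * (1 - b) * (B * Real.cos t - A * Real.sin t)
        + 4 * (1 - b) ^ 2)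
    (hv : ∀ t : ℝ, v t = 1 / 2 + 2 * (2 * b - 1) * Real.cos a ^ 2 / D t) :
    ∀ t₀ : ℝ, B * Real.cos t₀ - A * Real.sin t₀ = 2 * (b - 1) → v t₀ = 1 :=
  crossing_interface_general a b ha hb2 A B hA hB D v hD hv
end

section
/- Suppose b > 1/2 and b ≠ 1, and set c = (2b − 1)cos²a/(1 − b)². Then c > 0 and for every t ∈ ℝ one has √(1+c)/(√(1+c) + 1) ≤ v(t) ≤ √(1+c)/(√(1+c) − 1); that is, the orbit stays in the strip between the lines x' = √(1+c)/(√(1+c)+1) and x' = √(1+c)/(√(1+c)−1). -/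
/-!
Write `u = 2(1 - b)` and `ρ = √(1 + c)`. The identity `A² + B² = u² ρ²` turns `D t` into
`u² (ρ² + 1 + 2y)` with `y = (B cos t - A sin t) / u`, and Cauchy–Schwarz gives `|y| ≤ ρ`.
Hence `D t / u²` ranges over `[(ρ - 1)², (ρ + 1)²]`, and
`v t = 1/2 + (ρ² - 1) / (2 (ρ² + 1 + 2y))` lies between the values
`ρ / (ρ + 1)` and `ρ / (ρ - 1)` taken at the two ends.
-/

open Real

lemma abs_mul_cos_sub_mul_sin_le_sqrt (A B t : ℝ) :
    |B * cos t - A * sin t| ≤ √(A ^ 2 + B ^ 2) := by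
  apply Real.abs_le_sqrt
  nlinarith [sq_nonneg (A * cos t + B * sin t), sin_sq_add_cos_sq t]

lemma sin_two_mul_sq_add_sq_cos_two_mul (a b : ℝ) :
    sin (2 * a) ^ 2 + (2 * b - 1 + cos (2 * a)) ^ 2
      = (2 * (1 - b)) ^ 2 + 4 * (2 * b - 1) * cos a ^ 2 := by
  rw [sin_two_mul, cos_two_mul]
  linear_combination 4 * cos a ^ 2 * sin_sq_add_cos_sq a

lemma half_add_div_mem_Icc {ρ y : ℝ} (hρ : 1 < ρ) (hy : |y| ≤ ρ) :
    1 / 2 + (ρ ^ 2 - 1) / (2 * (ρ ^ 2 + 1 + 2 * y)) ∈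
      Set.Icc (ρ / (ρ + 1)) (ρ / (ρ - 1)) := by
  obtain ⟨hy_lo, hy_hi⟩ := abs_le.mp hy
  have hlo : (ρ - 1) ^ 2 ≤ ρ ^ 2 + 1 + 2 * y := by nlinarith
  have hhi : ρ ^ 2 + 1 + 2 * y ≤ (ρ + 1) ^ 2 := by nlinarith
  have hpos : 0 < (ρ - 1) ^ 2 := pow_pos (by linarith) 2
  have hnum : 0 ≤ ρ ^ 2 - 1 := by nlinarith
  have hρ1 : ρ - 1 ≠ 0 := by linarith
  have hlower : ρ / (ρ + 1) = 1 / 2 + (ρ ^ 2 - 1) / (2 * (ρ + 1) ^ 2) := by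
    field_simp; ring
  have hupper : ρ / (ρ - 1) = 1 / 2 + (ρ ^ 2 - 1) / (2 * (ρ - 1) ^ 2) := by
    field_simp; ring
  rw [hlower, hupper]
  constructor
  · gcongr
    linarith
  · gcongr

theorem orbit_in_strip_general (a b c : ℝ)
    (ha : |a| < Real.pi / 2) (hb1 : b ≠ 1)
    (hbb : b > 1 / 2)
    (A B : ℝ) (hA : A = Real.sin (2 * a)) (hB : B = 2 * b - 1 + Real.cos (2 * a))
    (hc : c = (2 * b - 1) * Real.cos a ^ 2 / (1 - b) ^ 2)
    (D v : ℝ → ℝ)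
    (hD : ∀ t : ℝ, D t =
      A ^ 2 + B ^ 2 + 4 * (1 - b) * (B * Real.cos t - A * Real.sin t)
        + 4 * (1 - b) ^ 2)
    (hv : ∀ t : ℝ, v t = 1 / 2 + 2 * (2 * b - 1) * Real.cos a ^ 2 / D t) :
    c > 0 ∧
      ∀ t : ℝ,
        Real.sqrt (1 + c) / (Real.sqrt (1 + c) + 1) ≤ v t ∧
        v t ≤ Real.sqrt (1 + c) / (Real.sqrt (1 + c) - 1) := by
  have hcos : 0 < cos a := cos_pos_of_mem_Ioo ⟨(abs_lt.mp ha).1, (abs_lt.mp ha).2⟩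
  have h1b : 1 - b ≠ 0 := sub_ne_zero.mpr hb1.symm
  have hc_pos : 0 < c := by
    have : 0 < 2 * b - 1 := by linarith
    rw [hc]; positivity
  set u := 2 * (1 - b) with hu
  have hu0 : u ≠ 0 := mul_ne_zero two_ne_zero h1b
  set ρ := √(1 + c)
  have hρ_sq : ρ ^ 2 = 1 + c := sq_sqrt (by linarith)
  have hρ : 1 < ρ := lt_sqrt_of_sq_lt (by linarith)
  have hAB : A ^ 2 + B ^ 2 = u ^ 2 * ρ ^ 2 := by
    rw [hA, hB, sin_two_mul_sq_add_sq_cos_two_mul, hρ_sq, hc]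
    field_simp; ring
  refine ⟨hc_pos, fun t => ?_⟩
  set y := (B * cos t - A * sin t) / u
  have hy : |y| ≤ ρ := by
    rw [abs_div, div_le_iff₀ (abs_pos.mpr hu0)]
    calc |B * cos t - A * sin t| ≤ √(A ^ 2 + B ^ 2) := abs_mul_cos_sub_mul_sin_le_sqrt A B t
      _ = ρ * |u| := by
        rw [hAB, sqrt_mul (sq_nonneg u), sqrt_sq_eq_abs, sqrt_sq (by linarith), mul_comm]
  have hDt : D t = u ^ 2 * (ρ ^ 2 + 1 + 2 * y) := by
    rw [hD t, hAB, mul_add, mul_add, show u ^ 2 * (2 * y) = 2 * u * (u * y) by ring,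
      mul_div_cancel₀ _ hu0, hu]
    ring
  have hvt : v t = 1 / 2 + (ρ ^ 2 - 1) / (2 * (ρ ^ 2 + 1 + 2 * y)) := by
    rw [hv t, hDt, hρ_sq, hc]
    field_simp; ring
  rw [hvt]
  exact half_add_div_mem_Icc hρ hy

/-- Case `b > 1/2`, `b ≠ 1`: with `c = (2b-1) cos² a / (1-b)²`,
`A = sin 2a`, `B = 2b - 1 + cos 2a`,
`D t = A² + B² + 4(1-b)(B cos t - A sin t) + 4(1-b)²` and
`v t = 1/2 + 2(2b-1) cos² a / D t`, one has `c > 0` and for all `t`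
`√(1+c)/(√(1+c)+1) ≤ v t ≤ √(1+c)/(√(1+c)-1)`: the orbit stays in the strip
between the lines `x' = √(1+c)/(√(1+c)+1)` and `x' = √(1+c)/(√(1+c)-1)`. -/
theorem orbit_in_strip (a b c : ℝ)
    (ha : |a| < Real.pi / 2) (hb2 : b ≠ 1 / 2) (hb1 : b ≠ 1)
    (hab : |a| + |b| > 0) (hbb : b > 1 / 2)
    (A B : ℝ) (hA : A = Real.sin (2 * a)) (hB : B = 2 * b - 1 + Real.cos (2 * a))
    (hc : c = (2 * b - 1) * Real.cos a ^ 2 / (1 - b) ^ 2)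
    (D v : ℝ → ℝ)
    (hD : ∀ t : ℝ, D t =
      A ^ 2 + B ^ 2 + 4 * (1 - b) * (B * Real.cos t - A * Real.sin t)
        + 4 * (1 - b) ^ 2)
    (hv : ∀ t : ℝ, v t = 1 / 2 + 2 * (2 * b - 1) * Real.cos a ^ 2 / D t) :
    c > 0 ∧
      ∀ t : ℝ,
        Real.sqrt (1 + c) / (Real.sqrt (1 + c) + 1) ≤ v t ∧
        v t ≤ Real.sqrt (1 + c) / (Real.sqrt (1 + c) - 1) :=
  orbit_in_strip_general a b c ha hb1 hbb A B hA hB hc D v hD hv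
end

section
/- Energy equation for the sister equation: let I ⊆ ℝ be an open interval and let x : I → ℝ be twice differentiable with x'(t) ≠ 1 and cos x(t) ≠ 0 for all t ∈ I, satisfying d/dt(cos x(t)/(1 − x'(t))) = +sin x(t) on I (equivalently, (cos x(t))·x''(t)/(1 − x'(t))² − (sin x(t))·x'(t)/(1 − x'(t)) = sin x(t)). Then the function t ↦ (1 − x'(t))·exp(x'(t))/cos(x(t)) is constant on I; equivalently (1 − x'(t))·exp(x'(t)) = c·cos x(t) on I for some constant c. -/
/-!
The energy is `E = (1 - x') exp x' / cos x`. Differentiating,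
`E' = -x' exp x' (x'' cos x - (1 - x') sin x) / cos² x`, and clearing the denominators of the
sister equation shows that it says exactly `x'' cos x = (1 - x') sin x`. Hence `E' = 0`, and `E`
is constant on the interval by the mean value theorem.
-/

open Real

theorem Convex.is_const_of_hasDerivAt_zero {𝕜 G : Type*} [RCLike 𝕜] [NormedAddCommGroup G]
    [NormedSpace 𝕜 G] {f : 𝕜 → G} {s : Set 𝕜} (hs : Convex ℝ s)
    (hf : ∀ t ∈ s, HasDerivAt f 0 t) {a b : 𝕜} (ha : a ∈ s) (hb : b ∈ s) : f a = f b := by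
  have := hs.norm_image_sub_le_of_norm_hasDerivWithin_le (C := 0)
    (fun t ht => (hf t ht).hasDerivWithinAt) (by simp) ha hb
  simpa [sub_eq_zero, eq_comm] using this

theorem sister_equation_iff {c s v a : ℝ} (hv : v ≠ 1) :
    c * a / (1 - v) ^ 2 - s * v / (1 - v) = s ↔ c * a = s * (1 - v) := by
  have hv' : 1 - v ≠ 0 := sub_ne_zero.mpr hv.symm
  rw [div_sub_div _ _ (pow_ne_zero 2 hv') hv', div_eq_iff (mul_ne_zero (pow_ne_zero 2 hv') hv')]
  constructor <;> intro h
  · refine mul_right_cancel₀ hv' ?_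
    linear_combination h
  · linear_combination (1 - v) * h

noncomputable def sisterEnergy (x v : ℝ → ℝ) (t : ℝ) : ℝ :=
  (1 - v t) * exp (v t) / cos (x t)

theorem hasDerivAt_sisterEnergy {x v : ℝ → ℝ} {t a : ℝ} (hx : HasDerivAt x (v t) t)
    (hv : HasDerivAt v a t) (hc : cos (x t) ≠ 0) :
    HasDerivAt (sisterEnergy x v)
      (-(v t) * exp (v t) * (cos (x t) * a - sin (x t) * (1 - v t)) / cos (x t) ^ 2) t := by
  have hnum : HasDerivAt (fun s => (1 - v s) * exp (v s))
      ((0 - a) * exp (v t) + (1 - v t) * (exp (v t) * a)) t :=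
    ((hasDerivAt_const t 1).sub hv).mul hv.exp
  have hcos : HasDerivAt (fun s => cos (x s)) (-sin (x t) * v t) t :=
    (hasDerivAt_cos (x t)).comp t hx
  refine (hnum.div hcos hc).congr_deriv ?_
  ring

theorem sister_energy_equation_general (I : Set ℝ)
    (hI' : I.OrdConnected)
    (x x' x'' : ℝ → ℝ)
    (hx1 : ∀ t ∈ I, HasDerivAt x (x' t) t)
    (hx2 : ∀ t ∈ I, HasDerivAt x' (x'' t) t)
    (hne : ∀ t ∈ I, x' t ≠ 1)
    (hcos : ∀ t ∈ I, Real.cos (x t) ≠ 0)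
    (heq : ∀ t ∈ I,
      Real.cos (x t) * x'' t / (1 - x' t) ^ 2
        - Real.sin (x t) * x' t / (1 - x' t) = Real.sin (x t)) :
    (∀ s ∈ I, ∀ t ∈ I,
      (1 - x' s) * Real.exp (x' s) / Real.cos (x s)
        = (1 - x' t) * Real.exp (x' t) / Real.cos (x t)) ∧
    ∃ c : ℝ, ∀ t ∈ I, (1 - x' t) * Real.exp (x' t) = c * Real.cos (x t) := by
  have hderiv : ∀ t ∈ I, HasDerivAt (sisterEnergy x x') 0 t := fun t ht => by
    simpa [(sister_equation_iff (hne t ht)).1 (heq t ht)] using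
      hasDerivAt_sisterEnergy (hx1 t ht) (hx2 t ht) (hcos t ht)
  have hconst : ∀ s ∈ I, ∀ t ∈ I, sisterEnergy x x' s = sisterEnergy x x' t :=
    fun s hs t ht => hI'.convex.is_const_of_hasDerivAt_zero hderiv hs ht
  refine ⟨hconst, ?_⟩
  obtain rfl | ⟨t₀, ht₀⟩ := I.eq_empty_or_nonempty
  · exact ⟨0, by simp⟩
  · refine ⟨sisterEnergy x x' t₀, fun t ht => ?_⟩
    rw [← hconst t ht t₀ ht₀, sisterEnergy, div_mul_cancel₀ _ (hcos t ht)]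

/-- Energy equation for the sister equation `d/dt(cos x / (1 - x')) = sin x`:
if `I` is an open interval, `x` is twice differentiable on `I` (with first
derivative `x'` and second derivative `x''`), `x' ≠ 1` and `cos x ≠ 0` on `I`,
and `cos(x t) x''(t)/(1 - x'(t))² - sin(x t) x'(t)/(1 - x'(t)) = sin(x t)`
on `I`, then `t ↦ (1 - x'(t)) exp(x'(t)) / cos(x t)` is constant on `I`;
equivalently `(1 - x'(t)) exp(x'(t)) = c cos(x t)` on `I` for some constant
`c`. -/
theorem sister_energy_equation (I : Set ℝ) (hI : IsOpen I)
    (hI' : I.OrdConnected)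
    (x x' x'' : ℝ → ℝ)
    (hx1 : ∀ t ∈ I, HasDerivAt x (x' t) t)
    (hx2 : ∀ t ∈ I, HasDerivAt x' (x'' t) t)
    (hne : ∀ t ∈ I, x' t ≠ 1)
    (hcos : ∀ t ∈ I, Real.cos (x t) ≠ 0)
    (heq : ∀ t ∈ I,
      Real.cos (x t) * x'' t / (1 - x' t) ^ 2
        - Real.sin (x t) * x' t / (1 - x' t) = Real.sin (x t)) :
    (∀ s ∈ I, ∀ t ∈ I,
      (1 - x' s) * Real.exp (x' s) / Real.cos (x s)
        = (1 - x' t) * Real.exp (x' t) / Real.cos (x t)) ∧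
    ∃ c : ℝ, ∀ t ∈ I, (1 - x' t) * Real.exp (x' t) = c * Real.cos (x t) :=
  sister_energy_equation_general I hI' x x' x'' hx1 hx2 hne hcos heq
end
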